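/- arXiv:2008.04725 — 2 statements merged into one kernel-verified Lean document; each statement's English description precedes it below -/
import Mathlib

section
/- Let u : ℝ³ → ℝ³ be a vector field each of whose components is a Schwartz function, and suppose that for some r > 0 one has Δu(x) = 0 (componentwise) whenever ‖x‖ ≥ r. Then for every R > r, ∫_{{x : ‖x‖ ≥ R}} ‖∇u(x)‖² dx ≤ (1/(R−r)) · (∫_{ℝ³} ‖∇u‖² dx)^{1/2} · (∫_{ℝ³} ‖u‖² dx)^{1/2}, where ‖∇u‖² := Σ_{j,k=1}^{3} (∂_j u_k)². -/
/-!
Test the equations `Δ u_k = 0` against `ψ u_k`, where `ψ` is a radial cutoff vanishing on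
`B(0, r)`, equal to `1` outside `B(0, R)` and with `‖∇ψ‖ ≤ c` for a given `c > (R - r)⁻¹`
(slope exactly `(R - r)⁻¹` would force a kink).
Integrating by parts, `∫ ψ ‖∇u‖² = -∫ ∑ ∂_jψ u_k ∂_j u_k - ∫ ψ u · Δu`, and the last term
vanishes because `ψ = 0` wherever `u` is not known to be harmonic. Hence
`∫_{‖x‖ ≥ R} ‖∇u‖² ≤ ∫ ψ ‖∇u‖² ≤ c ∫ ‖∇u‖ ‖u‖ ≤ c ‖∇u‖₂ ‖u‖₂` by Cauchy–Schwarz, and `c` may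
tend to `(R - r)⁻¹`.
-/

open MeasureTheory Real

noncomputable section

/-- The `j`-th partial derivative of a scalar function on ℝ³. -/
def pd (j : Fin 3) (f : EuclideanSpace ℝ (Fin 3) → ℝ) (x : EuclideanSpace ℝ (Fin 3)) : ℝ :=
  fderiv ℝ f x (EuclideanSpace.single j 1)

open scoped SchwartzMap LineDeriv Laplacian

lemma exists_cutoff_real {r R c : ℝ} (hrR : r < R) (hc : (R - r)⁻¹ < c) :
    ∃ χ : ℝ → ℝ, Differentiable ℝ χ ∧ Monotone χ ∧ (∀ t, ‖deriv χ t‖ ≤ c) ∧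
      (∀ t ≤ r, χ t = 0) ∧ ∀ t, R ≤ t → χ t = 1 := by
  have hRr : 0 < R - r := sub_pos.2 hrR
  have hc0 : 0 < c := (inv_pos.2 hRr).trans hc
  have hrIn : (2 * c)⁻¹ < (R - r) / 2 := by
    rw [inv_lt_comm₀ (by positivity) (by positivity)] at hc
    rw [mul_inv, lt_div_iff₀ two_pos]
    linarith
  -- supported in `(r, R)` and equal to `1` on an interval of length `c⁻¹`, so `c⁻¹ ≤ ∫ b`
  let b : ContDiffBump ((r + R) / 2) := ⟨(2 * c)⁻¹, (R - r) / 2, by positivity, hrIn⟩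
  have hb : Function.support b = Set.Ioo r R := by
    rw [b.support_eq, Real.ball_eq_Ioo]
    congr 1 <;> ring
  set I := ∫ s, b s
  have hI : c⁻¹ ≤ I := by
    have := b.measure_closedBall_le_integral volume
    rw [Real.volume_real_closedBall (by positivity)] at this
    convert this using 1
    change c⁻¹ = 2 * (2 * c)⁻¹
    field_simp
  have hI0 : 0 < I := (inv_pos.2 hc0).trans_le hI
  have hderiv : ∀ t, HasDerivAt (fun t => (∫ s in r..t, b s) / I) (b t / I) t := fun t =>
    (intervalIntegral.integral_hasDerivAt_right b.integrable.intervalIntegrable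
      b.integrable.aestronglyMeasurable.stronglyMeasurableAtFilter
      b.continuous.continuousAt).div_const I
  have hdiff : Differentiable ℝ (fun t => (∫ s in r..t, b s) / I) :=
    fun t => (hderiv t).differentiableAt
  refine ⟨_, hdiff, monotone_of_deriv_nonneg hdiff fun t => ?_, fun t => ?_, fun t ht => ?_,
    fun t ht => ?_⟩
  · rw [(hderiv t).deriv]
    exact div_nonneg b.nonneg hI0.le
  · rw [(hderiv t).deriv, norm_div, Real.norm_of_nonneg b.nonneg, Real.norm_of_nonneg hI0.le,
      div_le_iff₀ hI0]
    calc b t ≤ 1 := b.le_one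
      _ = c * c⁻¹ := (mul_inv_cancel₀ hc0.ne').symm
      _ ≤ c * I := by gcongr
  · have : Set.EqOn b 0 (Set.uIcc r t) := fun s hs => by
      rw [Set.uIcc_of_ge ht] at hs
      exact Function.notMem_support.1 (hb ▸ fun h => hs.2.not_gt h.1)
    simp [intervalIntegral.integral_congr this]
  · rw [intervalIntegral.integral_eq_integral_of_support_subset
      (hb ▸ Set.Ioo_subset_Ioc_self.trans (Set.Ioc_subset_Ioc_right ht)), div_self hI0.ne']

lemma exists_radial_cutoff {E : Type*} [NormedAddCommGroup E] [InnerProductSpace ℝ E]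
    {r R c : ℝ} (hr : 0 < r) (hrR : r < R) (hc : (R - r)⁻¹ < c) :
    ∃ ψ : E → ℝ, Differentiable ℝ ψ ∧ (∀ x, ψ x ∈ Set.Icc 0 1) ∧ (∀ x, ‖fderiv ℝ ψ x‖ ≤ c) ∧
      (∀ x, ‖x‖ ≤ r → ψ x = 0) ∧ ∀ x, R ≤ ‖x‖ → ψ x = 1 := by
  obtain ⟨χ, hχd, hχm, hχ', hχ0, hχ1⟩ := exists_cutoff_real hrR hc
  have hc0 : 0 ≤ c := (norm_nonneg _).trans (hχ' 0)
  have hlip : LipschitzWith ⟨c, hc0⟩ (fun x : E => χ ‖x‖) :=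
    ((lipschitzWith_of_nnnorm_deriv_le hχd fun t => hχ' t).comp
      lipschitzWith_one_norm).weaken (mul_one _).le
  refine ⟨fun x => χ ‖x‖, fun x => ?_, fun x => ⟨?_, ?_⟩,
    fun x => norm_fderiv_le_of_lipschitz ℝ hlip, fun x hx => hχ0 _ hx, fun x hx => hχ1 _ hx⟩
  · rcases lt_or_ge ‖x‖ r with hx | hx
    · have : (fun x : E => χ ‖x‖) =ᶠ[nhds x] fun _ => 0 := by
        filter_upwards [Metric.isOpen_ball.mem_nhds (mem_ball_zero_iff.2 hx)] with y hy
        exact hχ0 _ (mem_ball_zero_iff.1 hy).le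
      exact this.differentiableAt_iff.2 (differentiableAt_const 0)
    · exact (hχd _).comp x (differentiableAt_id.norm ℝ (norm_pos_iff.1 (hr.trans_le hx)))
  · exact (hχ0 _ (min_le_right _ r)).symm.le.trans (hχm (min_le_left _ _))
  · exact (hχm (le_max_left _ R)).trans (hχ1 _ (le_max_right _ _)).le

lemma abs_sum_sum_apply_mul_le {ι κ E : Type*} [Fintype ι] [Fintype κ] [NormedAddCommGroup E]
    [InnerProductSpace ℝ E] (b : OrthonormalBasis ι ℝ E) (L : E →L[ℝ] ℝ) (a : κ → ℝ)
    (g : ι → κ → ℝ) :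
    |∑ i, ∑ k, L (b i) * (a k * g i k)| ≤ ‖L‖ * (√(∑ i, ∑ k, g i k ^ 2) * √(∑ k, a k ^ 2)) := by
  set v : EuclideanSpace ℝ ι := WithLp.toLp 2 fun i => ∑ k, a k * g i k
  have hL : ∑ i, ∑ k, L (b i) * (a k * g i k) = L (b.repr.symm v) := by
    simp only [← b.sum_repr_symm, map_sum, map_smul, smul_eq_mul, ← Finset.mul_sum, v]
    exact Finset.sum_congr rfl fun i _ => mul_comm _ _
  have hv : ‖v‖ ≤ √(∑ i, ∑ k, g i k ^ 2) * √(∑ k, a k ^ 2) := by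
    rw [EuclideanSpace.norm_eq, ← Real.sqrt_mul (by positivity), Finset.sum_mul]
    refine Real.sqrt_le_sqrt (Finset.sum_le_sum fun i _ => ?_)
    rw [Real.norm_eq_abs, sq_abs, mul_comm]
    exact Finset.sum_mul_sq_le_sq_mul_sq _ _ _
  rw [hL, ← Real.norm_eq_abs]
  calc ‖L (b.repr.symm v)‖ ≤ ‖L‖ * ‖b.repr.symm v‖ := L.le_opNorm _
    _ = ‖L‖ * ‖v‖ := by rw [LinearIsometryEquiv.norm_map]
    _ ≤ _ := by gcongr

section WeightedIntegrationByParts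

variable {E : Type*} [NormedAddCommGroup E] [NormedSpace ℝ E] [FiniteDimensional ℝ E]
  [MeasurableSpace E] [BorelSpace E] {μ : Measure E} [μ.IsAddHaarMeasure]

lemma integrable_schwartz_mul (f g : 𝓢(E, ℝ)) : Integrable (fun x => f x * g x) μ :=
  g.integrable.bdd_mul f.continuous.aestronglyMeasurable
    (ae_of_all _ fun x => f.norm_le_seminorm ℝ x)

lemma integrable_mul_schwartz_mul {φ : E → ℝ} (hφ : AEStronglyMeasurable φ μ) {C : ℝ}
    (hφC : ∀ x, ‖φ x‖ ≤ C) (f g : 𝓢(E, ℝ)) : Integrable (fun x => φ x * (f x * g x)) μ :=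
  (integrable_schwartz_mul f g).bdd_mul hφ (ae_of_all _ hφC)

lemma integrable_fderiv_apply_mul_schwartz_mul {ψ : E → ℝ} {C : ℝ} (hψ'C : ∀ x, ‖fderiv ℝ ψ x‖ ≤ C)
    (v : E) (f g : 𝓢(E, ℝ)) : Integrable (fun x => fderiv ℝ ψ x v * (f x * g x)) μ :=
  integrable_mul_schwartz_mul (measurable_fderiv_apply_const ℝ ψ v).aestronglyMeasurable
    (fun x => ((fderiv ℝ ψ x).le_opNorm v).trans
      (mul_le_mul_of_nonneg_right (hψ'C x) (norm_nonneg v))) f g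

lemma integral_weighted_mul_lineDerivOp_right_eq {ψ : E → ℝ} (hψ : Differentiable ℝ ψ) {C C' : ℝ}
    (hψC : ∀ x, ‖ψ x‖ ≤ C) (hψ'C : ∀ x, ‖fderiv ℝ ψ x‖ ≤ C') (f g : 𝓢(E, ℝ)) (v : E) :
    ∫ x, ψ x * (f x * ∂_{v} g x) ∂μ =
      -∫ x, fderiv ℝ ψ x v * (f x * g x) ∂μ - ∫ x, ψ x * (∂_{v} f x * g x) ∂μ := by
  have hψm : AEStronglyMeasurable ψ μ := hψ.continuous.aestronglyMeasurable
  have hprod : ∀ x, fderiv ℝ (fun y => ψ y * f y) x v =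
      ψ x * ∂_{v} f x + fderiv ℝ ψ x v * f x := by
    intro x
    rw [fderiv_fun_mul (hψ x) (f.differentiable x), SchwartzMap.lineDerivOp_apply_eq_fderiv]
    simp only [add_apply, smul_apply, smul_eq_mul]
    ring
  have hleft := integrable_mul_schwartz_mul hψm hψC (∂_{v} f) g (μ := μ)
  have hmixed := integrable_fderiv_apply_mul_schwartz_mul hψ'C v f g (μ := μ)
  have ibp := integral_mul_fderiv_eq_neg_fderiv_mul_of_integrable (μ := μ)
    (f := fun x => ψ x * f x) (g := g) (v := v) ?_ ?_ ?_
    (fun x _ => (hψ.mul f.differentiable) x) (fun x _ => g.differentiable x)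
  · simp only [hprod, ← SchwartzMap.lineDerivOp_apply_eq_fderiv] at ibp
    calc ∫ x, ψ x * (f x * ∂_{v} g x) ∂μ = ∫ x, ψ x * f x * ∂_{v} g x ∂μ :=
          integral_congr_ae (ae_of_all _ fun x => (mul_assoc _ _ _).symm)
      _ = -∫ x, (ψ x * ∂_{v} f x + fderiv ℝ ψ x v * f x) * g x ∂μ := ibp
      _ = -(∫ x, fderiv ℝ ψ x v * (f x * g x) ∂μ + ∫ x, ψ x * (∂_{v} f x * g x) ∂μ) := by
          rw [← integral_add hmixed hleft]
          exact congrArg _ (integral_congr_ae (ae_of_all _ fun x => by ring))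
      _ = _ := neg_add' _ _
  · exact (hleft.add hmixed).congr (ae_of_all _ fun x => by simp only [Pi.add_apply, hprod]; ring)
  · exact (integrable_mul_schwartz_mul hψm hψC f (∂_{v} g)).congr
      (ae_of_all _ fun x => by dsimp only; rw [SchwartzMap.lineDerivOp_apply_eq_fderiv]; ring)
  · exact (integrable_mul_schwartz_mul hψm hψC f g).congr (ae_of_all _ fun x => by ring)

end WeightedIntegrationByParts

section SqrtProduct
variable {α : Type*} [MeasurableSpace α] {μ : Measure α} {F G : α → ℝ}

lemma memLp_two_sqrt (hF : Integrable F μ) (hF0 : 0 ≤ F) : MemLp (fun x => √(F x)) 2 μ :=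
  (memLp_two_iff_integrable_sq (continuous_sqrt.comp_aestronglyMeasurable
    hF.aestronglyMeasurable)).2 (hF.congr (ae_of_all _ fun x => (sq_sqrt (hF0 x)).symm))

lemma integrable_sqrt_mul_sqrt (hF : Integrable F μ) (hG : Integrable G μ) (hF0 : 0 ≤ F)
    (hG0 : 0 ≤ G) : Integrable (fun x => √(F x) * √(G x)) μ :=
  (memLp_two_sqrt hF hF0).integrable_mul (memLp_two_sqrt hG hG0)

lemma integral_sqrt_mul_sqrt_le (hF : Integrable F μ) (hG : Integrable G μ) (hF0 : 0 ≤ F)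
    (hG0 : 0 ≤ G) :
    ∫ x, √(F x) * √(G x) ∂μ ≤ (∫ x, F x ∂μ) ^ (1 / 2 : ℝ) * (∫ x, G x ∂μ) ^ (1 / 2 : ℝ) := by
  have h := integral_mul_le_Lp_mul_Lq_of_nonneg Real.HolderConjugate.two_two
    (ae_of_all μ fun x => sqrt_nonneg (F x)) (ae_of_all μ fun x => sqrt_nonneg (G x))
    (by simpa using memLp_two_sqrt hF hF0) (by simpa using memLp_two_sqrt hG hG0)
  simpa [Real.rpow_two, sq_sqrt (hF0 _), sq_sqrt (hG0 _)] using h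

end SqrtProduct

section DirichletEnergy

variable {ι κ E : Type*} [Fintype ι] [Fintype κ] [NormedAddCommGroup E] [InnerProductSpace ℝ E]
  [FiniteDimensional ℝ E] [MeasurableSpace E] [BorelSpace E] {μ : Measure E} [μ.IsAddHaarMeasure]

def gradNormSq (b : OrthonormalBasis ι ℝ E) (u : κ → 𝓢(E, ℝ)) (x : E) : ℝ :=
  ∑ i, ∑ k, (∂_{b i} (u k) x) ^ 2

def valueNormSq (u : κ → 𝓢(E, ℝ)) (x : E) : ℝ :=
  ∑ k, (u k x) ^ 2

lemma integrable_gradNormSq (b : OrthonormalBasis ι ℝ E) (u : κ → 𝓢(E, ℝ)) :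
    Integrable (gradNormSq b u) μ :=
  integrable_finsetSum _ fun _ _ => integrable_finsetSum _ fun _ _ =>
    (integrable_schwartz_mul _ _).congr (ae_of_all _ fun _ => (sq _).symm)

lemma integrable_valueNormSq (u : κ → 𝓢(E, ℝ)) : Integrable (valueNormSq u) μ :=
  integrable_finsetSum _ fun _ _ =>
    (integrable_schwartz_mul _ _).congr (ae_of_all _ fun _ => (sq _).symm)

lemma integral_mul_sum_sq_lineDerivOp_eq {ψ : E → ℝ} (hψ : Differentiable ℝ ψ) {C C' : ℝ}
    (hψC : ∀ x, ‖ψ x‖ ≤ C) (hψ'C : ∀ x, ‖fderiv ℝ ψ x‖ ≤ C') (b : OrthonormalBasis ι ℝ E)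
    (f : 𝓢(E, ℝ)) :
    ∫ x, ψ x * ∑ i, (∂_{b i} f x) ^ 2 ∂μ =
      -∫ x, ∑ i, fderiv ℝ ψ x (b i) * (f x * ∂_{b i} f x) ∂μ - ∫ x, ψ x * (f x * Δ f x) ∂μ := by
  have hψm : AEStronglyMeasurable ψ μ := hψ.continuous.aestronglyMeasurable
  have hterm : ∀ i, ∫ x, ψ x * (∂_{b i} f x) ^ 2 ∂μ =
      -∫ x, fderiv ℝ ψ x (b i) * (f x * ∂_{b i} f x) ∂μ -
        ∫ x, ψ x * (f x * ∂_{b i} (∂_{b i} f) x) ∂μ := fun i => by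
    have h := integral_weighted_mul_lineDerivOp_right_eq (μ := μ) hψ hψC hψ'C f (∂_{b i} f) (b i)
    simp only [← sq] at h
    linarith
  have hΔ : ∀ x, ψ x * (f x * Δ f x) = ∑ i, ψ x * (f x * ∂_{b i} (∂_{b i} f) x) := fun x => by
    rw [SchwartzMap.laplacian_eq_sum b, sum_apply, Finset.mul_sum, Finset.mul_sum]
  have hsq : ∀ i, Integrable (fun x => ψ x * (∂_{b i} f x) ^ 2) μ := fun i =>
    (integrable_mul_schwartz_mul hψm hψC (∂_{b i} f) (∂_{b i} f)).congr
      (ae_of_all _ fun x => by simp only [sq])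
  simp only [Finset.mul_sum, hΔ]
  rw [integral_finsetSum _ fun i _ => hsq i,
    integral_finsetSum _ fun i _ => integrable_fderiv_apply_mul_schwartz_mul hψ'C (b i) _ _,
    integral_finsetSum _ fun _ _ => integrable_mul_schwartz_mul hψm hψC _ _,
    ← Finset.sum_neg_distrib, ← Finset.sum_sub_distrib]
  exact Finset.sum_congr rfl fun i _ => hterm i

lemma integral_mul_gradNormSq_eq {ψ : E → ℝ} (hψ : Differentiable ℝ ψ) {C C' : ℝ}
    (hψC : ∀ x, ‖ψ x‖ ≤ C) (hψ'C : ∀ x, ‖fderiv ℝ ψ x‖ ≤ C') (b : OrthonormalBasis ι ℝ E)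
    (u : κ → 𝓢(E, ℝ)) (hharm : ∀ x, ψ x ≠ 0 → ∀ k, Δ (u k) x = 0) :
    ∫ x, ψ x * gradNormSq b u x ∂μ =
      -∫ x, ∑ i, ∑ k, fderiv ℝ ψ x (b i) * (u k x * ∂_{b i} (u k) x) ∂μ := by
  have hψm : AEStronglyMeasurable ψ μ := hψ.continuous.aestronglyMeasurable
  have hvanish : ∀ k, ∫ x, ψ x * (u k x * Δ (u k) x) ∂μ = 0 := fun k => by
    refine integral_eq_zero_of_ae (ae_of_all _ fun x => ?_)
    by_cases hx : ψ x = 0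
    · simp [hx]
    · simp [hharm x hx k]
  have hsq : ∀ k, Integrable (fun x => ψ x * ∑ i, (∂_{b i} (u k) x) ^ 2) μ := fun k =>
    (integrable_finsetSum _ fun i _ => (integrable_schwartz_mul (∂_{b i} (u k))
      (∂_{b i} (u k))).congr (ae_of_all _ fun _ => (sq _).symm)).bdd_mul hψm (ae_of_all _ hψC)
  have hmixed : ∀ k, Integrable
      (fun x => ∑ i, fderiv ℝ ψ x (b i) * (u k x * ∂_{b i} (u k) x)) μ := fun k =>
    integrable_finsetSum _ fun i _ => integrable_fderiv_apply_mul_schwartz_mul hψ'C (b i) _ _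
  calc ∫ x, ψ x * gradNormSq b u x ∂μ = ∫ x, ∑ k, ψ x * ∑ i, (∂_{b i} (u k) x) ^ 2 ∂μ := by
        simp only [gradNormSq, Finset.mul_sum]
        exact integral_congr_ae (ae_of_all _ fun x => Finset.sum_comm)
    _ = ∑ k, -∫ x, ∑ i, fderiv ℝ ψ x (b i) * (u k x * ∂_{b i} (u k) x) ∂μ := by
        rw [integral_finsetSum _ fun k _ => hsq k]
        refine Finset.sum_congr rfl fun k _ => ?_
        rw [integral_mul_sum_sq_lineDerivOp_eq hψ hψC hψ'C b (u k), hvanish, sub_zero]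
    _ = _ := by
        rw [Finset.sum_neg_distrib, ← integral_finsetSum _ fun k _ => hmixed k]
        simp only [Finset.sum_comm (γ := κ)]

lemma setIntegral_gradNormSq_le_of_cutoff (b : OrthonormalBasis ι ℝ E) (u : κ → 𝓢(E, ℝ))
    {s : Set E} (hs : MeasurableSet s) {ψ : E → ℝ} {c : ℝ} (hψ : Differentiable ℝ ψ)
    (hψ01 : ∀ x, ψ x ∈ Set.Icc 0 1) (hψ' : ∀ x, ‖fderiv ℝ ψ x‖ ≤ c) (hψs : ∀ x ∈ s, ψ x = 1)
    (hharm : ∀ x, ψ x ≠ 0 → ∀ k, Δ (u k) x = 0) :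
    ∫ x in s, gradNormSq b u x ∂μ ≤
      c * ((∫ x, gradNormSq b u x ∂μ) ^ (1 / 2 : ℝ) * (∫ x, valueNormSq u x ∂μ) ^ (1 / 2 : ℝ)) := by
  have hψC : ∀ x, ‖ψ x‖ ≤ 1 := fun x => by
    rw [Real.norm_of_nonneg (hψ01 x).1]; exact (hψ01 x).2
  have hc : 0 ≤ c := (norm_nonneg _).trans (hψ' 0)
  have hG := integrable_gradNormSq b u (μ := μ)
  have hU := integrable_valueNormSq u (μ := μ)
  have hG0 : 0 ≤ gradNormSq b u := fun x => by unfold gradNormSq; positivity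
  have hU0 : 0 ≤ valueNormSq u := fun x => by unfold valueNormSq; positivity
  calc ∫ x in s, gradNormSq b u x ∂μ ≤ ∫ x, ψ x * gradNormSq b u x ∂μ := by
        rw [← integral_indicator hs]
        refine integral_mono (hG.indicator hs)
          (hG.bdd_mul hψ.continuous.aestronglyMeasurable (ae_of_all _ hψC)) fun x => ?_
        by_cases hx : x ∈ s
        · simp [hx, hψs x hx]
        · simpa [hx] using mul_nonneg (hψ01 x).1 (hG0 x)
    _ = -∫ x, ∑ i, ∑ k, fderiv ℝ ψ x (b i) * (u k x * ∂_{b i} (u k) x) ∂μ :=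
        integral_mul_gradNormSq_eq hψ hψC hψ' b u hharm
    _ ≤ ∫ x, c * (√(gradNormSq b u x) * √(valueNormSq u x)) ∂μ := by
        rw [← integral_neg]
        refine integral_mono (integrable_finsetSum _ fun i _ => integrable_finsetSum _ fun k _ =>
          integrable_fderiv_apply_mul_schwartz_mul hψ' (b i) (u k) (∂_{b i} (u k))).neg
          ((integrable_sqrt_mul_sqrt hG hU hG0 hU0).const_mul c) fun x => ?_
        exact (neg_le_abs _).trans ((abs_sum_sum_apply_mul_le b _ _ _).trans
          (mul_le_mul_of_nonneg_right (hψ' x) (by positivity)))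
    _ ≤ _ := by
        rw [integral_const_mul]
        exact mul_le_mul_of_nonneg_left (integral_sqrt_mul_sqrt_le hG hU hG0 hU0) hc

end DirichletEnergy

/-- Tail estimate: if the components of a Schwartz vector field u on ℝ³ are harmonic
outside the ball of radius r, then for every R > r the Dirichlet energy of u outside the
ball of radius R is at most (R−r)⁻¹ ‖∇u‖_{L²} ‖u‖_{L²}. -/
theorem tail_gradient_estimate_of_harmonic_outside_ball
    (u : Fin 3 → SchwartzMap (EuclideanSpace ℝ (Fin 3)) ℝ) (r : ℝ) (hr : 0 < r)
    (hharm : ∀ x : EuclideanSpace ℝ (Fin 3), r ≤ ‖x‖ →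
      ∀ k, ∑ j, pd j (fun y => pd j (fun z => u k z) y) x = 0) :
    ∀ R : ℝ, r < R →
      ∫ x in {x : EuclideanSpace ℝ (Fin 3) | R ≤ ‖x‖},
          ∑ j, ∑ k, (pd j (fun y => u k y) x) ^ 2
        ≤ (R - r)⁻¹ *
            (∫ x : EuclideanSpace ℝ (Fin 3), ∑ j, ∑ k, (pd j (fun y => u k y) x) ^ 2)
              ^ ((1 : ℝ) / 2) *
            (∫ x : EuclideanSpace ℝ (Fin 3), ∑ k, (u k x) ^ 2) ^ ((1 : ℝ) / 2) := by
  intro R hR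
  set b := EuclideanSpace.basisFun (Fin 3) ℝ
  have hb : ∀ j, b j = EuclideanSpace.single j 1 := EuclideanSpace.basisFun_apply _ _
  have hgrad : ∀ x, ∑ j, ∑ k, (pd j (fun y => u k y) x) ^ 2 = gradNormSq b u x := fun x => by
    simp only [gradNormSq, hb]; rfl
  have hΔ : ∀ x, r ≤ ‖x‖ → ∀ k, Δ (u k) x = 0 := fun x hx k => by
    rw [SchwartzMap.laplacian_eq_sum b, sum_apply]
    simp only [hb]
    exact hharm x hx k
  simp only [hgrad, mul_assoc]
  refine ge_of_tendsto (x := nhdsWithin (R - r)⁻¹ (Set.Ioi (R - r)⁻¹))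
    ((continuous_id.mul continuous_const).tendsto _ |>.mono_left nhdsWithin_le_nhds)
    (eventually_nhdsWithin_of_forall fun c hc => ?_)
  obtain ⟨ψ, hψ, hψ01, hψ', hψ0, hψ1⟩ :=
    exists_radial_cutoff (E := EuclideanSpace ℝ (Fin 3)) hr hR hc
  exact setIntegral_gradNormSq_le_of_cutoff b u (measurableSet_le measurable_const measurable_norm)
    hψ hψ01 hψ' (fun x hx => hψ1 x hx) fun x hx k => hΔ x (not_le.1 (mt (hψ0 x) hx)).le k
end
end

section
/- Let α ≥ 1 and let f : ℝ³ → ℝ be a measurable function that is 2α-periodic in each coordinate, i.e. f(x + 2αk) = f(x) for all x ∈ ℝ³ and all k ∈ ℤ³. Let g : ℝ³ → ℝ be measurable with |g(x)| ≤ |f(x)| for all x and g(x) = 0 whenever x ∉ [−(α+1), α+1]³. Then for every R with 0 < R ≤ α − 1, ∫_{{x : ‖x‖ ≥ R}} |g(x)|² dx ≤ 27 ∫_{{x ∈ (−α,α)³ : ‖x‖ ≥ R}} |f(x)|² dx. -/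
open MeasureTheory ENNReal

noncomputable section

/-
Every point x of the tail {‖x‖ ≥ R} at which g can be nonzero lies in the box [−(α+1), α+1]³.
Off the null set where some |xᵢ| = α, each coordinate can be moved into (−α, α) by subtracting
2αkᵢ with kᵢ ∈ {−1, 0, 1}. If some kᵢ ≠ 0, the shifted coordinate has modulus at least
2α − (α+1) ≥ R, so the shifted point stays in the tail. Hence the tail of the box is covered,
up to a null set, by the 27 translates by 2αk of the tail of the cell Q_α, and by periodicity
|f|² has the same integral over each of them.
-/

theorem EuclideanSpace.volume_setOf_apply_eq {ι : Type*} [Fintype ι] (i : ι) (c : ℝ) :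
    volume {x : EuclideanSpace ℝ ι | x i = c} = 0 := by
  rw [← Measure.pi_hyperplane (fun _ : ι => (volume : Measure ℝ)) i c, ← volume_pi]
  exact (PiLp.volume_preserving_ofLp ι).measure_preimage
    (measurableSet_eq_fun (measurable_pi_apply i) measurable_const).nullMeasurableSet

theorem EuclideanSpace.ae_forall_abs_apply_ne {ι : Type*} [Fintype ι] (c : ℝ) :
    ∀ᵐ x : EuclideanSpace ℝ ι, ∀ i, |x i| ≠ c := by
  have hne : ∀ i (c : ℝ), ∀ᵐ x : EuclideanSpace ℝ ι, x i ≠ c := fun i c =>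
    compl_mem_ae_iff.2 (volume_setOf_apply_eq i c)
  filter_upwards [ae_all_iff.2 fun i => hne i c, ae_all_iff.2 fun i => hne i (-c)]
    with x hpos hneg i habs
  exact (eq_or_eq_neg_of_abs_eq habs).elim (hpos i) (hneg i)

theorem Function.Periodic.setLIntegral_preimage_sub {G : Type*} [AddGroup G] [MeasurableSpace G]
    [MeasurableAdd G] (μ : Measure G) [μ.IsAddRightInvariant] {F : G → ℝ≥0∞} {v : G}
    (hF : Function.Periodic F v) (s : Set G) :
    ∫⁻ x in (· - v) ⁻¹' s, F x ∂μ = ∫⁻ x in s, F x ∂μ := by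
  have h := (measurePreserving_add_right μ v).setLIntegral_comp_preimage_emb
    (MeasurableEquiv.addRight v).measurableEmbedding F ((· - v) ⁻¹' s)
  simp only [show ∀ x, F (x + v) = F x from hF, Set.preimage_preimage, add_sub_cancel_right,
    Set.preimage_id'] at h
  exact h.symm

theorem exists_abs_sub_two_mul_int_lt {α t : ℝ} (ht : |t| < 3 * α) (hne : |t| ≠ α) :
    ∃ m ∈ ({-1, 0, 1} : Finset ℤ), |t - 2 * α * m| < α := by
  rcases lt_or_gt_of_ne hne with hlt | hgt
  · exact ⟨0, by decide, by simpa using hlt⟩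
  · rcases le_or_gt 0 t with h0 | h0
    · refine ⟨1, by decide, ?_⟩
      rw [abs_of_nonneg h0] at ht hgt
      rw [abs_lt]
      push_cast
      constructor <;> linarith
    · refine ⟨-1, by decide, ?_⟩
      rw [abs_of_neg h0] at ht hgt
      rw [abs_lt]
      push_cast
      constructor <;> linarith

section Lattice

variable {ι : Type*} [Fintype ι]

def periodVec (α : ℝ) (k : ι → ℤ) : EuclideanSpace ℝ ι :=
  WithLp.toLp 2 (fun i => 2 * α * (k i : ℝ))

def cubeTail (α R : ℝ) : Set (EuclideanSpace ℝ ι) :=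
  {x | (∀ i, |x i| < α) ∧ R ≤ ‖x‖}

theorem exists_sub_periodVec_mem_cubeTail [DecidableEq ι] {α R : ℝ} {x : EuclideanSpace ℝ ι}
    (hR : 0 < R) (hxR : R ≤ ‖x‖) (hx : ∀ i, |x i| ≤ 2 * α - R) (hne : ∀ i, |x i| ≠ α) :
    ∃ k ∈ Fintype.piFinset (fun _ => ({-1, 0, 1} : Finset ℤ)),
      x - periodVec α k ∈ cubeTail α R := by
  choose k hk hcube using fun i =>
    exists_abs_sub_two_mul_int_lt (by linarith [abs_nonneg (x i), hx i] : |x i| < 3 * α) (hne i)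
  have happly : ∀ i, (x - periodVec α k) i = x i - 2 * α * k i := fun i => rfl
  refine ⟨k, Fintype.mem_piFinset.2 hk, fun i => happly i ▸ hcube i, ?_⟩
  by_cases hk0 : k = 0
  · have hzero : periodVec α (0 : ι → ℤ) = 0 := by ext i; simp [periodVec]
    simpa [hk0, hzero] using hxR
  obtain ⟨i, hi⟩ := Function.ne_iff.1 hk0
  have hα : 0 < α := by linarith [abs_nonneg (x i), hx i]
  have hki : |(k i : ℝ)| = 1 := by
    have := hk i
    simp only [Finset.mem_insert, Finset.mem_singleton] at this
    rcases this with h | h | h <;> simp_all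
  calc R ≤ |2 * α * k i| - |x i| := by
        rw [abs_mul, hki, abs_of_pos (by linarith)]; linarith [hx i]
    _ ≤ |x i - 2 * α * k i| := abs_sub_comm (2 * α * k i) (x i) ▸ abs_sub_abs_le_abs_sub _ _
    _ = ‖(x - periodVec α k) i‖ := by rw [happly, Real.norm_eq_abs]
    _ ≤ ‖x - periodVec α k‖ := PiLp.norm_apply_le _ i

end Lattice

theorem tail_of_cutoff_extension_le_general
    (α : ℝ) (f g : EuclideanSpace ℝ (Fin 3) → ℝ)
    (hper : ∀ (x : EuclideanSpace ℝ (Fin 3)) (k : Fin 3 → ℤ),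
      f (x + (show EuclideanSpace ℝ (Fin 3) from WithLp.toLp 2 (fun i => 2 * α * (k i : ℝ)))) = f x)
    (hdom : ∀ x, |g x| ≤ |f x|)
    (hsupp : ∀ x : EuclideanSpace ℝ (Fin 3), ¬(∀ i, |x i| ≤ α + 1) → g x = 0) :
    ∀ R : ℝ, 0 < R → R ≤ α - 1 →
      ∫⁻ x in {x : EuclideanSpace ℝ (Fin 3) | R ≤ ‖x‖}, ENNReal.ofReal ((g x) ^ 2)
        ≤ 27 * ∫⁻ x in {x : EuclideanSpace ℝ (Fin 3) | (∀ i, |x i| < α) ∧ R ≤ ‖x‖},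
            ENNReal.ofReal ((f x) ^ 2) := by
  intro R hR hRα
  set F := fun x => ENNReal.ofReal (f x ^ 2)
  set box := {x : EuclideanSpace ℝ (Fin 3) | ∀ i, |x i| ≤ α + 1}
  set S := Fintype.piFinset (fun _ : Fin 3 => ({-1, 0, 1} : Finset ℤ))
  have hbox : MeasurableSet box := by
    simp only [box, Set.ofPred_forall]
    exact MeasurableSet.iInter fun i => measurableSet_le (by fun_prop) measurable_const
  have hg_le : ∀ x, ENNReal.ofReal (g x ^ 2) ≤ box.indicator F x := fun x => by
    by_cases hx : x ∈ box
    · rw [Set.indicator_of_mem hx]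
      exact ENNReal.ofReal_le_ofReal (sq_le_sq.2 (hdom x))
    · simp [hsupp x hx]
  have hcover : (box ∩ {x | R ≤ ‖x‖} : Set (EuclideanSpace ℝ (Fin 3)))
      ≤ᵐ[volume] ⋃ k : S, (· - periodVec α k) ⁻¹' cubeTail α R := by
    filter_upwards [EuclideanSpace.ae_forall_abs_apply_ne α] with x hne ⟨hxbox, hxR⟩
    obtain ⟨k, hk, hmem⟩ := exists_sub_periodVec_mem_cubeTail hR hxR
      (fun i => by linarith [hxbox i]) hne
    exact Set.mem_iUnion.2 ⟨⟨k, hk⟩, hmem⟩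
  calc ∫⁻ x in {x | R ≤ ‖x‖}, ENNReal.ofReal (g x ^ 2)
      ≤ ∫⁻ x in {x | R ≤ ‖x‖}, box.indicator F x := lintegral_mono hg_le
    _ = ∫⁻ x in box ∩ {x | R ≤ ‖x‖}, F x := setLIntegral_indicator hbox F
    _ ≤ ∫⁻ x in ⋃ k : S, (· - periodVec α k) ⁻¹' cubeTail α R, F x := lintegral_mono_set' hcover
    _ ≤ ∑' k : S, ∫⁻ x in (· - periodVec α k) ⁻¹' cubeTail α R, F x := lintegral_iUnion_le _ _
    _ = ∑' _ : S, ∫⁻ x in cubeTail α R, F x := by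
        congr 1 with k
        have hF : Function.Periodic F (periodVec α k) := fun x => by simp [F, periodVec, hper]
        exact hF.setLIntegral_preimage_sub volume _
    _ = 27 * ∫⁻ x in cubeTail α R, F x := by simp [S]

/-- Tail estimate for the cut-off extension of a periodic function: if f is 2α-periodic
(α ≥ 1), |g| ≤ |f|, and g vanishes outside [−(α+1), α+1]³, then for 0 < R ≤ α − 1 the tail
∫_{‖x‖≥R} g² is at most 27 times the tail of f² over the periodic cell (−α,α)³. -/
theorem tail_of_cutoff_extension_le
    (α : ℝ) (hα : 1 ≤ α) (f g : EuclideanSpace ℝ (Fin 3) → ℝ)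
    (hf : Measurable f) (hg : Measurable g)
    (hper : ∀ (x : EuclideanSpace ℝ (Fin 3)) (k : Fin 3 → ℤ),
      f (x + (show EuclideanSpace ℝ (Fin 3) from WithLp.toLp 2 (fun i => 2 * α * (k i : ℝ)))) = f x)
    (hdom : ∀ x, |g x| ≤ |f x|)
    (hsupp : ∀ x : EuclideanSpace ℝ (Fin 3), ¬(∀ i, |x i| ≤ α + 1) → g x = 0) :
    ∀ R : ℝ, 0 < R → R ≤ α - 1 →
      ∫⁻ x in {x : EuclideanSpace ℝ (Fin 3) | R ≤ ‖x‖}, ENNReal.ofReal ((g x) ^ 2)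
        ≤ 27 * ∫⁻ x in {x : EuclideanSpace ℝ (Fin 3) | (∀ i, |x i| < α) ∧ R ≤ ‖x‖},
            ENNReal.ofReal ((f x) ^ 2) :=
  tail_of_cutoff_extension_le_general α f g hper hdom hsupp
end
end
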